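/- arXiv:1509.07683 — 4 statements merged into one kernel-verified Lean document; each statement's English description precedes it below -/
import Mathlib

section
/- Let A and B be positive real numbers. For each nonzero integer k define S_k = ∑_{n ∈ ℤ} (A·n² + B·k²)^{-3/2}. Then k²·S_k tends to 2/(B·√A) as the integer k tends to +∞. -/
/-!
The summand `f(x) = (A x² + C)^(-3/2)` is even and decreasing on `[0, ∞)`, with antiderivative
`x / (C √(A x² + C))` tending to `1 / (C √A)`. Comparing the sum with the integral therefore gives
`|∑ₙ f(n) - 2 / (C √A)| ≤ f(0) = C^(-3/2)`. For `C = B k²` the error term, multiplied by `k²`,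
is `1 / (B √B k) → 0`.
-/

open Filter Set Topology Real

section SumIntegralComparison

variable {f G : ℝ → ℝ} {L : ℝ}

theorem AntitoneOn.integral_eq_sub_of_hasDerivAt (hf : AntitoneOn f (Ici 0))
    (hG : ∀ x ∈ Ici (0 : ℝ), HasDerivAt G (f x) x) (n : ℕ) :
    ∫ x in (0 : ℝ)..n, f x = G n - G 0 := by
  have hsub : uIcc (0 : ℝ) n ⊆ Ici 0 := by
    rw [uIcc_of_le n.cast_nonneg]; exact Icc_subset_Ici_self
  exact intervalIntegral.integral_eq_sub_of_hasDerivAt (fun x hx => hG x (hsub hx))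
    (hf.mono hsub).intervalIntegrable

theorem AntitoneOn.sum_range_succ_le_sub (hf : AntitoneOn f (Ici 0))
    (hG : ∀ x ∈ Ici (0 : ℝ), HasDerivAt G (f x) x) (n : ℕ) :
    ∑ i ∈ Finset.range n, f (i + 1) ≤ G n - G 0 := by
  rw [← hf.integral_eq_sub_of_hasDerivAt hG]
  simpa using (hf.mono Icc_subset_Ici_self).sum_le_integral (x₀ := 0) (a := n)

theorem AntitoneOn.sub_le_sum_range (hf : AntitoneOn f (Ici 0))
    (hG : ∀ x ∈ Ici (0 : ℝ), HasDerivAt G (f x) x) (n : ℕ) :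
    G n - G 0 ≤ ∑ i ∈ Finset.range n, f i := by
  rw [← hf.integral_eq_sub_of_hasDerivAt hG]
  simpa using (hf.mono Icc_subset_Ici_self).integral_le_sum (x₀ := 0) (a := n)

theorem AntitoneOn.summable_nat_succ (hf : AntitoneOn f (Ici 0)) (hf₀ : ∀ n : ℕ, 0 ≤ f n)
    (hG : ∀ x ∈ Ici (0 : ℝ), HasDerivAt G (f x) x) (hGL : Tendsto G atTop (𝓝 L)) :
    Summable fun n : ℕ => f (n + 1) := by
  have hGn : Tendsto (fun n : ℕ => G n - G 0) atTop (𝓝 (L - G 0)) :=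
    (hGL.comp tendsto_natCast_atTop_atTop).sub_const _
  obtain ⟨c, hc⟩ := hGn.bddAbove_range
  refine summable_of_sum_range_le (c := c) (fun n => by exact_mod_cast hf₀ (n + 1)) fun n => ?_
  exact (hf.sum_range_succ_le_sub hG n).trans (hc ⟨n, rfl⟩)

theorem AntitoneOn.tsum_nat_succ_mem_Icc (hf : AntitoneOn f (Ici 0)) (hf₀ : ∀ n : ℕ, 0 ≤ f n)
    (hG : ∀ x ∈ Ici (0 : ℝ), HasDerivAt G (f x) x) (hGL : Tendsto G atTop (𝓝 L)) :
    ∑' n : ℕ, f (n + 1) ∈ Icc (L - G 0 - f 0) (L - G 0) := by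
  have hGn : Tendsto (fun n : ℕ => G n - G 0) atTop (𝓝 (L - G 0)) :=
    (hGL.comp tendsto_natCast_atTop_atTop).sub_const _
  have hsucc := hf.summable_nat_succ hf₀ hG hGL
  have hsum : Summable fun n : ℕ => f n := (summable_nat_add_iff 1).mp (by exact_mod_cast hsucc)
  have htsum : ∑' n : ℕ, f n = f 0 + ∑' n : ℕ, f (n + 1) := by
    simpa using hsum.tsum_eq_zero_add
  constructor
  · have : L - G 0 ≤ ∑' n : ℕ, f n := le_of_tendsto' hGn fun n =>
      (hf.sub_le_sum_range hG n).trans (hsum.sum_le_tsum _ fun i _ => hf₀ i)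
    linarith
  · exact le_of_tendsto_of_tendsto' hsucc.hasSum.tendsto_sum_nat hGn
      (hf.sum_range_succ_le_sub hG)

theorem AntitoneOn.abs_tsum_int_sub_le (hf : AntitoneOn f (Ici 0)) (hf₀ : ∀ n : ℕ, 0 ≤ f n)
    (hev : f.Even) (hG : ∀ x ∈ Ici (0 : ℝ), HasDerivAt G (f x) x)
    (hGL : Tendsto G atTop (𝓝 L)) :
    |∑' n : ℤ, f n - 2 * (L - G 0)| ≤ f 0 := by
  have hnat : Summable fun n : ℕ => f n :=
    (summable_nat_add_iff 1).mp (by exact_mod_cast hf.summable_nat_succ hf₀ hG hGL)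
  have hsum : Summable fun n : ℤ => f n :=
    .of_nat_of_neg (by simpa using hnat) (by simpa [hev _] using hnat)
  obtain ⟨hlow, hupp⟩ := hf.tsum_nat_succ_mem_Icc hf₀ hG hGL
  have heven : (fun n : ℤ => f n).Even := fun n => by simpa using hev n
  rw [tsum_int_eq_zero_add_two_mul_tsum_pnat heven hsum]
  have hpnat : ∑' n : ℕ+, f ((n : ℕ) : ℤ) = ∑' n : ℕ, f (n + 1) := by
    simpa using tsum_pnat_eq_tsum_succ (f := fun n : ℕ => f n)
  rw [hpnat, nsmul_eq_mul, Int.cast_zero, abs_le]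
  constructor <;> push_cast <;> linarith

end SumIntegralComparison

section InverseCubeSum

variable {A C : ℝ}

theorem rpow_neg_three_halves {y : ℝ} (hy : 0 < y) : y ^ (-(3 / 2) : ℝ) = (y * √y)⁻¹ := by
  rw [rpow_neg hy.le, show (3 / 2 : ℝ) = 1 + 1 / 2 by norm_num, rpow_add hy, rpow_one,
    ← sqrt_eq_rpow]

theorem hasDerivAt_div_mul_sqrt (hA : 0 ≤ A) (hC : 0 < C) (x : ℝ) :
    HasDerivAt (fun x => x / (C * √(A * x ^ 2 + C))) ((A * x ^ 2 + C) ^ (-(3 / 2) : ℝ)) x := by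
  have hy : 0 < A * x ^ 2 + C := by positivity
  have hsq : HasDerivAt (fun x => √(A * x ^ 2 + C)) (A * (2 * x) / (2 * √(A * x ^ 2 + C))) x := by
    simpa using (((hasDerivAt_pow 2 x).const_mul A).add_const C).sqrt hy.ne'
  refine ((hasDerivAt_id' x).div (hsq.const_mul C) (by positivity)).congr_deriv ?_
  rw [rpow_neg_three_halves hy]
  field_simp
  rw [sq_sqrt hy.le]
  ring

theorem tendsto_div_mul_sqrt (hA : 0 < A) (hC : 0 < C) :
    Tendsto (fun x => x / (C * √(A * x ^ 2 + C))) atTop (𝓝 (1 / (C * √A))) := by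
  have hsmall : Tendsto (fun x : ℝ => A + C / x ^ 2) atTop (𝓝 A) := by
    simpa using tendsto_const_nhds.add
      (tendsto_const_nhds.div_atTop (tendsto_pow_atTop (α := ℝ) two_ne_zero))
  have hlim : Tendsto (fun x => 1 / (C * √(A + C / x ^ 2))) atTop (𝓝 (1 / (C * √A))) :=
    tendsto_const_nhds.div (hsmall.sqrt.const_mul C) (by positivity)
  refine hlim.congr' ?_
  filter_upwards [eventually_gt_atTop 0] with x hx
  have hsplit : A * x ^ 2 + C = x ^ 2 * (A + C / x ^ 2) := by field_simp
  rw [hsplit, sqrt_mul (sq_nonneg x), sqrt_sq hx.le]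
  field_simp

theorem antitoneOn_rpow_neg_three_halves (hA : 0 ≤ A) (hC : 0 < C) :
    AntitoneOn (fun x : ℝ => (A * x ^ 2 + C) ^ (-(3 / 2) : ℝ)) (Ici 0) := by
  intro s hs t _ hst
  apply rpow_le_rpow_of_nonpos (by positivity) _ (by norm_num)
  gcongr

theorem abs_tsum_rpow_neg_three_halves_sub_le (hA : 0 < A) (hC : 0 < C) :
    |∑' n : ℤ, (A * (n : ℝ) ^ 2 + C) ^ (-(3 / 2) : ℝ) - 2 / (C * √A)| ≤ (C * √C)⁻¹ := by
  have h := (antitoneOn_rpow_neg_three_halves hA.le hC).abs_tsum_int_sub_le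
    (fun _ => by positivity) (fun _ => by simp) (fun x _ => hasDerivAt_div_mul_sqrt hA.le hC x)
    (tendsto_div_mul_sqrt hA hC)
  simp only [zero_pow two_ne_zero, mul_zero, zero_add, zero_div, sub_zero, mul_one_div] at h
  rwa [← rpow_neg_three_halves hC]

end InverseCubeSum

/-- For positive reals `A`, `B` and `S_k = ∑_{n ∈ ℤ} (A·n² + B·k²)^{-3/2}`,
the quantity `k² · S_k` tends to `2/(B·√A)` as the integer `k → +∞`. -/
theorem k_sq_mul_Sk_tendsto (A B : ℝ) (hA : 0 < A) (hB : 0 < B) :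
    Tendsto (fun k : ℤ =>
        (k : ℝ) ^ 2 * ∑' n : ℤ, (A * (n : ℝ) ^ 2 + B * (k : ℝ) ^ 2) ^ (-(3 / 2) : ℝ))
      atTop (nhds (2 / (B * Real.sqrt A))) := by
  rw [tendsto_iff_norm_sub_tendsto_zero]
  refine squeeze_zero' (.of_forall fun _ => norm_nonneg _) ?_
    ((tendsto_intCast_atTop_atTop (R := ℝ)).inv_tendsto_atTop.const_mul (B * √B)⁻¹ |>.trans
      (by simp))
  filter_upwards [eventually_gt_atTop 0] with k hk
  have hk' : (0 : ℝ) < k := by exact_mod_cast hk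
  have hC : 0 < B * (k : ℝ) ^ 2 := by positivity
  have hlim : 2 / (B * √A) = (k : ℝ) ^ 2 * (2 / (B * (k : ℝ) ^ 2 * √A)) := by field_simp
  have hsqrt : √(B * (k : ℝ) ^ 2) = √B * k := by rw [sqrt_mul hB.le, sqrt_sq hk'.le]
  calc _ = (k : ℝ) ^ 2 * |∑' n : ℤ, (A * (n : ℝ) ^ 2 + B * (k : ℝ) ^ 2) ^ (-(3 / 2) : ℝ)
          - 2 / (B * (k : ℝ) ^ 2 * √A)| := by
        rw [Real.norm_eq_abs, hlim, ← mul_sub, abs_mul, abs_of_nonneg (sq_nonneg _)]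
    _ ≤ (k : ℝ) ^ 2 * (B * (k : ℝ) ^ 2 * √(B * (k : ℝ) ^ 2))⁻¹ :=
        mul_le_mul_of_nonneg_left (abs_tsum_rpow_neg_three_halves_sub_le hA hC) (sq_nonneg _)
    _ = (B * √B)⁻¹ * (k : ℝ)⁻¹ := by rw [hsqrt]; field_simp
end

section
/- Let Q : ℝ → ℝ, let ω̃ be a nonzero real number, let A, B ∈ ℂ, and let φ : ℝ → ℂ be twice differentiable with φ''(x) = Q(x)·φ(x) for all x ∈ ℝ. Suppose that as x → −∞ one has φ(x) − (A·e^{iω̃x} + B·e^{−iω̃x}) → 0 and φ'(x) − (iω̃·A·e^{iω̃x} − iω̃·B·e^{−iω̃x}) → 0, and that as x → +∞ one has φ(x) → 0 and φ'(x) → 0. Then ‖A‖ = ‖B‖. (A bound state mode is never superradiant: all flux coming from the horizon is reflected back.) -/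
/-!
The flux `Im (conj φ · φ')` is constant because `Q` is real. It tends to `0` at `+∞`, while at
`-∞` it tends to the flux `ω (‖A‖² - ‖B‖²)` of the superposition `A e^{iωx} + B e^{-iωx}`,
so `ω ≠ 0` forces `‖A‖ = ‖B‖`.
-/

open Filter Complex ComplexConjugate Topology

theorem Filter.Tendsto.mul_sub_mul_of_tendsto_sub {ι R : Type*} [NonUnitalSeminormedRing R]
    {l : Filter ι} {f₁ f₂ g₁ g₂ : ι → R}
    (h₁ : Tendsto (fun x => f₁ x - g₁ x) l (𝓝 0)) (h₂ : Tendsto (fun x => f₂ x - g₂ x) l (𝓝 0))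
    (hg₁ : IsBoundedUnder (· ≤ ·) l ((‖·‖) ∘ g₁)) (hg₂ : IsBoundedUnder (· ≤ ·) l ((‖·‖) ∘ g₂)) :
    Tendsto (fun x => f₁ x * f₂ x - g₁ x * g₂ x) l (𝓝 0) := by
  have hdecomp : ∀ x, f₁ x * f₂ x - g₁ x * g₂ x =
      (f₁ x - g₁ x) * (f₂ x - g₂ x) + (f₁ x - g₁ x) * g₂ x + g₁ x * (f₂ x - g₂ x) := by
    intro x; noncomm_ring
  simp only [hdecomp]
  simpa using ((h₁.mul h₂).add (h₁.zero_mul_isBoundedUnder_le hg₂)).add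
    (isBoundedUnder_le_mul_tendsto_zero hg₁ h₂)

section Wronskian

variable {Q : ℝ → ℝ} {φ φ' : ℝ → ℂ}

theorem hasDerivAt_im_conj_mul_deriv (hφ : ∀ x, HasDerivAt φ (φ' x) x)
    (hφ' : ∀ x, HasDerivAt φ' (Q x * φ x) x) (x : ℝ) :
    HasDerivAt (fun y => (conj (φ y) * φ' y).im) 0 x := by
  have hflux_deriv : imCLM (star (φ' x) * φ' x + star (φ x) * (Q x * φ x)) = 0 := by
    simp only [imCLM_apply, add_im, mul_im, star_def, conj_re, conj_im, ofReal_re, ofReal_im,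
      mul_re]
    ring
  exact (imCLM.hasFDerivAt.comp_hasDerivAt x ((hφ x).star.mul (hφ' x))).congr_deriv hflux_deriv

theorem im_conj_mul_deriv_eq_zero (hφ : ∀ x, HasDerivAt φ (φ' x) x)
    (hφ' : ∀ x, HasDerivAt φ' (Q x * φ x) x)
    (hφ_top : Tendsto φ atTop (𝓝 0)) (hφ'_top : Tendsto φ' atTop (𝓝 0)) (x : ℝ) :
    (conj (φ x) * φ' x).im = 0 := by
  have hconst : ∀ y, (conj (φ y) * φ' y).im = (conj (φ x) * φ' x).im := fun y =>
    is_const_of_deriv_eq_zero (fun y => (hasDerivAt_im_conj_mul_deriv hφ hφ' y).differentiableAt)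
      (fun y => (hasDerivAt_im_conj_mul_deriv hφ hφ' y).deriv) y x
  have hlim : Tendsto (fun y => (conj (φ y) * φ' y).im) atTop (𝓝 0) := by
    have h : Tendsto (fun y => conj (φ y) * φ' y) atTop (𝓝 0) := by
      simpa using hφ_top.star.mul hφ'_top
    exact (continuous_im.tendsto' 0 0 zero_im).comp h
  exact tendsto_nhds_unique (hlim.congr hconst) tendsto_const_nhds |>.symm

end Wronskian

theorem im_conj_mul_add_mul_conj_mul_I_mul (ω : ℝ) (A B : ℂ) {e : ℂ} (he : ‖e‖ = 1) :
    (conj (A * e + B * conj e) * (I * ω * A * e - I * ω * B * conj e)).im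
      = ω * (‖A‖ ^ 2 - ‖B‖ ^ 2) := by
  have he' : e.re * e.re + e.im * e.im = 1 := by
    rw [← normSq_apply, ← Complex.sq_norm, he, one_pow]
  simp only [mul_im, mul_re, add_re, add_im, sub_re, sub_im, conj_re, conj_im, I_re, I_im,
    ofReal_re, ofReal_im, Complex.sq_norm, normSq_apply]
  linear_combination (ω * (A.re * A.re + A.im * A.im - B.re * B.re - B.im * B.im)) * he'

theorem norm_exp_I_mul_ofReal_mul_ofReal (ω x : ℝ) : ‖exp (I * ω * x)‖ = 1 := by
  rw [mul_assoc, ← ofReal_mul, norm_exp_I_mul_ofReal]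

theorem exp_neg_I_mul_ofReal_mul_ofReal (ω x : ℝ) :
    exp (-(I * ω * x)) = conj (exp (I * ω * x)) := by
  rw [← exp_conj]; simp

theorem norm_eq_norm_of_im_conj_mul_eq_zero {ι : Type*} {l : Filter ι} [l.NeBot] {ω : ℝ}
    (hω : ω ≠ 0) {A B : ℂ} {e u v : ι → ℂ} (he : ∀ x, ‖e x‖ = 1)
    (huv : ∀ x, (conj (u x) * v x).im = 0)
    (hu : Tendsto (fun x => u x - (A * e x + B * conj (e x))) l (𝓝 0))
    (hv : Tendsto (fun x => v x - (I * ω * A * e x - I * ω * B * conj (e x))) l (𝓝 0)) :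
    ‖A‖ = ‖B‖ := by
  have hu_conj : Tendsto (fun x => conj (u x) - conj (A * e x + B * conj (e x))) l (𝓝 0) := by
    simpa using hu.star
  have hbound₁ : IsBoundedUnder (· ≤ ·) l ((‖·‖) ∘ fun x => conj (A * e x + B * conj (e x))) :=
    isBoundedUnder_of ⟨‖A‖ + ‖B‖, fun x => by
      rw [Function.comp_apply, norm_conj]
      simpa [he] using norm_add_le (A * e x) (B * conj (e x))⟩
  have hbound₂ : IsBoundedUnder (· ≤ ·) l
      ((‖·‖) ∘ fun x => I * ω * A * e x - I * ω * B * conj (e x)) :=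
    isBoundedUnder_of ⟨‖I * ω * A‖ + ‖I * ω * B‖, fun x => by
      simpa [he] using norm_sub_le (I * ω * A * e x) (I * ω * B * conj (e x))⟩
  have hflux := (continuous_im.tendsto' 0 0 zero_im).comp
    (hu_conj.mul_sub_mul_of_tendsto_sub hv hbound₁ hbound₂)
  simp only [Function.comp_def, sub_im, huv, im_conj_mul_add_mul_conj_mul_I_mul ω A B (he _),
    zero_sub, tendsto_const_nhds_iff, neg_eq_zero, mul_eq_zero, hω, false_or, sub_eq_zero] at hflux
  exact (sq_eq_sq₀ (norm_nonneg A) (norm_nonneg B)).mp hflux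

/-- A bound state mode is never superradiant: if `φ'' = Q·φ` with `Q` real,
`φ` behaves like `A·e^{iω̃x} + B·e^{−iω̃x}` as `x → −∞` and decays (together
with its derivative) as `x → +∞`, then `‖A‖ = ‖B‖`. -/
theorem bound_state_not_superradiant (Q : ℝ → ℝ) (ω : ℝ) (hω : ω ≠ 0)
    (A B : ℂ) (φ φ' : ℝ → ℂ)
    (hφ : ∀ x : ℝ, HasDerivAt φ (φ' x) x)
    (hφ' : ∀ x : ℝ, HasDerivAt φ' ((Q x : ℂ) * φ x) x)
    (h₁ : Tendsto (fun x : ℝ =>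
        φ x - (A * Complex.exp (Complex.I * ω * x)
          + B * Complex.exp (-(Complex.I * ω * x)))) atBot (nhds 0))
    (h₂ : Tendsto (fun x : ℝ =>
        φ' x - (Complex.I * ω * A * Complex.exp (Complex.I * ω * x)
          - Complex.I * ω * B * Complex.exp (-(Complex.I * ω * x)))) atBot (nhds 0))
    (h₃ : Tendsto φ atTop (nhds 0))
    (h₄ : Tendsto φ' atTop (nhds 0)) :
    ‖A‖ = ‖B‖ := by
  simp only [exp_neg_I_mul_ofReal_mul_ofReal] at h₁ h₂
  exact norm_eq_norm_of_im_conj_mul_eq_zero hω (norm_exp_I_mul_ofReal_mul_ofReal ω)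
    (im_conj_mul_deriv_eq_zero hφ hφ' h₃ h₄) h₁ h₂
end

section
/- Work in units ℓ = 1. Fix real parameters ν, r₊, r₋ with ν > 1 and r₊ > r₋ ≥ 0 and r₊ > 0, fix ω, m ∈ ℝ and k ∈ ℤ, and set s = √((ν²+3)·r₊·r₋). Let R(r) = √(R²(r)) and N(r) = √(N²(r)) with R²(r) = (r/4)·(3(ν²−1)r + (ν²+3)(r₊+r₋) − 4νs), N²(r) = (ν²+3)(r−r₊)(r−r₋)/(4R²(r)), N^θ(r) = (2νr − s)/(2R²(r)), and define the effective potential V(r) = ω² − (ω + k·N^θ(r))² + 2N(r)³·( R(r)·N(r)·R''(r) + (1/2)·N(r)·R'(r)² + 2·R(r)·R'(r)·N'(r) ) + N(r)²·( m² + k²/R²(r) ), where primes denote derivatives with respect to r. Then V(r) tends to ω_m² as r → +∞, where ω_m² = ((ν²+3)²/(12(ν²−1)))·(1 + 4m²/(ν²+3)). -/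
open Filter Topology

/-! With `f = R²` and `g = N²`, the derivative term of `V` collapses to
`g² f'' - g² f'² / (4 f) + g f' g'`, so no square roots survive and `V` is a rational function
of `r` for large `r`. After the substitution `u = 1/r` every piece of it is continuous at `u = 0`:
`N² → (ν²+3)/(3(ν²-1))`, `f'' = 3(ν²-1)/2`, `f'²/(4f) → 3(ν²-1)/4`, while `f' g'`, `N^θ` and
`1/R²` tend to `0`, because the leading terms of `(N²)'` cancel. -/

theorem deriv_deriv_sqrt_comp {f f' : ℝ → ℝ} {f'' r : ℝ}
    (hf : ∀ᶠ y in 𝓝 r, HasDerivAt f (f' y) y) (hf' : HasDerivAt f' f'' r) (hr : 0 < f r) :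
    deriv (deriv fun y => √(f y)) r = f'' / (2 * √(f r)) - f' r ^ 2 / (4 * f r * √(f r)) := by
  have hpos : ∀ᶠ y in 𝓝 r, 0 < f y :=
    continuousAt_const.eventually_lt hf.self_of_nhds.continuousAt hr
  have hderiv : deriv (fun y => √(f y)) =ᶠ[𝓝 r] fun y => f' y / (2 * √(f y)) := by
    filter_upwards [hf, hpos] with y hy hy0
    exact (hy.sqrt hy0.ne').deriv
  have hsqrt : 0 < √(f r) := Real.sqrt_pos.2 hr
  rw [hderiv.deriv_eq]
  refine ((hf'.fun_div ((hf.self_of_nhds.sqrt hr.ne').const_mul 2) (by positivity)).deriv).trans ?_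
  have hsq := Real.sq_sqrt hr.le
  generalize √(f r) = a at *
  rw [← hsq]
  field_simp
  ring

theorem sqrt_potential_term_eq {f f' g : ℝ → ℝ} {f'' g' r : ℝ}
    (hf : ∀ᶠ y in 𝓝 r, HasDerivAt f (f' y) y) (hf' : HasDerivAt f' f'' r)
    (hg : HasDerivAt g g' r) (hfr : 0 < f r) (hgr : 0 < g r) :
    2 * √(g r) ^ 3 * (√(f r) * √(g r) * deriv (deriv fun y => √(f y)) r
        + 1 / 2 * √(g r) * deriv (fun y => √(f y)) r ^ 2
        + 2 * √(f r) * deriv (fun y => √(f y)) r * deriv (fun y => √(g y)) r)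
      = g r ^ 2 * f'' - g r ^ 2 * (f' r ^ 2 / (4 * f r)) + g r * (f' r * g') := by
  rw [deriv_deriv_sqrt_comp hf hf' hfr, (hf.self_of_nhds.sqrt hfr.ne').deriv,
    (hg.sqrt hgr.ne').deriv]
  have hf0 : 0 < √(f r) := Real.sqrt_pos.2 hfr
  have hg0 : 0 < √(g r) := Real.sqrt_pos.2 hgr
  have hf2 := Real.sq_sqrt hfr.le
  have hg2 := Real.sq_sqrt hgr.le
  generalize √(f r) = a at *
  generalize √(g r) = b at *
  rw [← hf2, ← hg2]
  field_simp
  ring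

theorem tendsto_atTop_of_eventuallyEq_comp_inv {F G : ℝ → ℝ} (hG : ContinuousAt G 0)
    (hFG : ∀ᶠ r in atTop, F r = G r⁻¹) : Tendsto F atTop (𝓝 (G 0)) :=
  (hG.tendsto.comp tendsto_inv_atTop_zero).congr' (hFG.mono fun _ h => h.symm)

section Quadratic

variable {α : ℝ} (β : ℝ)

theorem eventually_pos_and_linear_pos (hα : 0 < α) : ∀ᶠ r in atTop, 0 < r ∧ 0 < α * r + β :=
  (eventually_gt_atTop 0).and <|
    (tendsto_atTop_add_const_right _ β (tendsto_id.const_mul_atTop hα)).eventually_gt_atTop 0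

theorem tendsto_linear_div_quadratic (hα : 0 < α) (a b : ℝ) :
    Tendsto (fun r => (a * r + b) / (α * r ^ 2 + β * r)) atTop (𝓝 0) := by
  have hG : ContinuousAt (fun u : ℝ => u * (a + b * u) / (α + β * u)) 0 := by
    fun_prop (disch := simpa using hα.ne')
  convert tendsto_atTop_of_eventuallyEq_comp_inv hG ?_ using 2
  · simp
  filter_upwards [eventually_pos_and_linear_pos β hα] with r ⟨hr, hlin⟩
  field_simp

theorem tendsto_quadratic_div_quadratic (hα : 0 < α) (c p q : ℝ) :
    Tendsto (fun r => c * (r - p) * (r - q) / (4 * (α * r ^ 2 + β * r))) atTop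
      (𝓝 (c / (4 * α))) := by
  have hG : ContinuousAt (fun u : ℝ => c * (1 - p * u) * (1 - q * u) / (4 * (α + β * u))) 0 := by
    fun_prop (disch := simpa using hα.ne')
  convert tendsto_atTop_of_eventuallyEq_comp_inv hG ?_ using 2
  · simp
  filter_upwards [eventually_pos_and_linear_pos β hα] with r ⟨hr, hlin⟩
  field_simp

theorem tendsto_sq_deriv_div_quadratic (hα : 0 < α) :
    Tendsto (fun r => (2 * α * r + β) ^ 2 / (4 * (α * r ^ 2 + β * r))) atTop (𝓝 α) := by
  have hG : ContinuousAt (fun u : ℝ => (2 * α + β * u) ^ 2 / (4 * (α + β * u))) 0 := by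
    fun_prop (disch := simpa using hα.ne')
  convert tendsto_atTop_of_eventuallyEq_comp_inv hG ?_ using 2
  · field_simp [hα.ne']
    ring
  filter_upwards [eventually_pos_and_linear_pos β hα] with r ⟨hr, hlin⟩
  field_simp

theorem hasDerivAt_quadratic (r : ℝ) : HasDerivAt (fun y => α * y ^ 2 + β * y) (2 * α * r + β) r :=
  (((hasDerivAt_pow 2 r).const_mul α).add ((hasDerivAt_id' r).const_mul β)).congr_deriv
    (by norm_num; ring)

theorem hasDerivAt_quadratic_div_quadratic (c p q : ℝ) {r : ℝ} (hr : α * r ^ 2 + β * r ≠ 0) :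
    HasDerivAt (fun y => c * (y - p) * (y - q) / (4 * (α * y ^ 2 + β * y)))
      (c * ((2 * r - p - q) * (α * r ^ 2 + β * r) - (r - p) * (r - q) * (2 * α * r + β))
        / (4 * (α * r ^ 2 + β * r) ^ 2)) r := by
  have hnum : HasDerivAt (fun y => c * (y - p) * (y - q)) (c * (2 * r - p - q)) r :=
    ((((hasDerivAt_id' r).sub_const p).const_mul c).mul
      ((hasDerivAt_id' r).sub_const q)).congr_deriv (by ring)
  refine (hnum.fun_div ((hasDerivAt_quadratic β r).const_mul 4) (by simpa using hr)).congr_deriv ?_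
  field_simp

theorem tendsto_deriv_mul_deriv_quadratic_div_quadratic (hα : 0 < α) (c p q : ℝ) :
    Tendsto (fun r => (2 * α * r + β) *
      (c * ((2 * r - p - q) * (α * r ^ 2 + β * r) - (r - p) * (r - q) * (2 * α * r + β))
        / (4 * (α * r ^ 2 + β * r) ^ 2))) atTop (𝓝 0) := by
  have hG : ContinuousAt (fun u : ℝ => c * (2 * α + β * u) * ((2 - (p + q) * u) * (α + β * u)
      - (1 - p * u) * (1 - q * u) * (2 * α + β * u)) / (4 * (α + β * u) ^ 2)) 0 := by
    fun_prop (disch := simpa using hα.ne')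
  convert tendsto_atTop_of_eventuallyEq_comp_inv hG ?_ using 2
  · simp
  filter_upwards [eventually_pos_and_linear_pos β hα] with r ⟨hr, hlin⟩
  field_simp
  ring

variable {c p q : ℝ} {R2 N2 : ℝ → ℝ}

theorem tendsto_sqrt_potential_term (hα : 0 < α) (hc : 0 < c)
    (hR2 : R2 = fun r => α * r ^ 2 + β * r)
    (hN2 : N2 = fun r => c * (r - p) * (r - q) / (4 * (α * r ^ 2 + β * r))) :
    Tendsto (fun r => 2 * √(N2 r) ^ 3 * (√(R2 r) * √(N2 r) * deriv (deriv fun y => √(R2 y)) r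
        + 1 / 2 * √(N2 r) * deriv (fun y => √(R2 y)) r ^ 2
        + 2 * √(R2 r) * deriv (fun y => √(R2 y)) r * deriv (fun y => √(N2 y)) r))
      atTop (𝓝 (c ^ 2 / (16 * α))) := by
  have hN2_lim : Tendsto N2 atTop (𝓝 (c / (4 * α))) :=
    hN2 ▸ tendsto_quadratic_div_quadratic β hα c p q
  have hderiv_sq_lim : Tendsto (fun r => (2 * α * r + β) ^ 2 / (4 * R2 r)) atTop (𝓝 α) :=
    hR2 ▸ tendsto_sq_deriv_div_quadratic β hα
  have hlim := (((hN2_lim.pow 2).mul_const (2 * α)).sub ((hN2_lim.pow 2).mul hderiv_sq_lim)).add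
    (hN2_lim.mul (tendsto_deriv_mul_deriv_quadratic_div_quadratic β hα c p q))
  convert hlim.congr' ?_ using 2
  · field_simp
    ring
  filter_upwards [eventually_pos_and_linear_pos β hα, eventually_gt_atTop p,
    eventually_gt_atTop q] with r ⟨hr, hlin⟩ hrp hrq
  have hR2r : 0 < α * r ^ 2 + β * r := by nlinarith
  have hN2r : 0 < N2 r := by
    rw [hN2]
    have := sub_pos.2 hrp
    have := sub_pos.2 hrq
    positivity
  have hR2d : ∀ y, HasDerivAt R2 (2 * α * y + β) y := hR2 ▸ hasDerivAt_quadratic β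
  have hR2dd : HasDerivAt (fun y => 2 * α * y + β) (2 * α) r :=
    (((hasDerivAt_id' r).const_mul (2 * α)).add_const β).congr_deriv (mul_one _)
  have hN2d := hN2 ▸ hasDerivAt_quadratic_div_quadratic β c p q hR2r.ne'
  exact (sqrt_potential_term_eq (Eventually.of_forall hR2d) hR2dd hN2d (hR2 ▸ hR2r) hN2r).symm

end Quadratic

theorem wads3_effective_potential_at_infinity_general (ν rp rm ω m : ℝ) (k : ℤ)
    (hν : 1 < ν)
    (s : ℝ)
    (R2 N2 Nθ R N : ℝ → ℝ)
    (hR2 : ∀ r, R2 r = r / 4 * (3 * (ν ^ 2 - 1) * r + (ν ^ 2 + 3) * (rp + rm) - 4 * ν * s))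
    (hN2 : ∀ r, N2 r = (ν ^ 2 + 3) * (r - rp) * (r - rm) / (4 * R2 r))
    (hNθ : ∀ r, Nθ r = (2 * ν * r - s) / (2 * R2 r))
    (hR : ∀ r, R r = Real.sqrt (R2 r))
    (hN : ∀ r, N r = Real.sqrt (N2 r))
    (V : ℝ → ℝ)
    (hV : ∀ r, V r = ω ^ 2 - (ω + (k : ℝ) * Nθ r) ^ 2
      + 2 * (N r) ^ 3 * (R r * N r * deriv (deriv R) r
        + 1 / 2 * N r * (deriv R r) ^ 2 + 2 * R r * deriv R r * deriv N r)
      + (N r) ^ 2 * (m ^ 2 + (k : ℝ) ^ 2 / R2 r)) :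
    Tendsto V atTop
      (nhds ((ν ^ 2 + 3) ^ 2 / (12 * (ν ^ 2 - 1)) * (1 + 4 * m ^ 2 / (ν ^ 2 + 3)))) := by
  set α := 3 * (ν ^ 2 - 1) / 4
  set β := ((ν ^ 2 + 3) * (rp + rm) - 4 * ν * s) / 4
  set c := ν ^ 2 + 3
  have hα : 0 < α := by simp only [α]; nlinarith
  have hc : 0 < c := by positivity
  have hR2q : R2 = fun r => α * r ^ 2 + β * r := funext fun r => by rw [hR2]; ring
  have hN2q : N2 = fun r => c * (r - rp) * (r - rm) / (4 * (α * r ^ 2 + β * r)) :=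
    funext fun r => by rw [hN2, hR2q]
  have hNθq : Nθ = fun r => (ν * r + -s / 2) / (α * r ^ 2 + β * r) :=
    funext fun r => by rw [hNθ, hR2q, ← div_div]; ring
  have hNθ_lim : Tendsto Nθ atTop (𝓝 0) := hNθq ▸ tendsto_linear_div_quadratic β hα ν (-s / 2)
  have hN2_lim : Tendsto N2 atTop (𝓝 (c / (4 * α))) :=
    hN2q ▸ tendsto_quadratic_div_quadratic β hα c rp rm
  have hinv_lim : Tendsto (fun r => (k : ℝ) ^ 2 / R2 r) atTop (𝓝 0) := by
    simpa [hR2q] using tendsto_linear_div_quadratic β hα 0 ((k : ℝ) ^ 2)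
  obtain rfl : R = fun y => √(R2 y) := funext hR
  obtain rfl : N = fun y => √(N2 y) := funext hN
  obtain rfl : V = _ := funext hV
  have hshift_lim : Tendsto (fun r => (ω + k * Nθ r) ^ 2) atTop (𝓝 ((ω + k * 0) ^ 2)) :=
    (tendsto_const_nhds.add (tendsto_const_nhds.mul hNθ_lim)).pow 2
  convert ((tendsto_const_nhds.sub hshift_lim).add
    (tendsto_sqrt_potential_term β hα hc hR2q hN2q)).add
      ((hN2_lim.sqrt.pow 2).mul (tendsto_const_nhds.add hinv_lim)) using 2
  have hν2 : ν ^ 2 - 1 ≠ 0 := by nlinarith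
  rw [Real.sq_sqrt (by positivity)]
  simp only [α, c]
  field_simp
  ring

/-- The effective potential of a massive scalar field mode on the warped AdS₃
black hole tends at infinity to
`ω_m² = ((ν²+3)²/(12(ν²−1)))·(1 + 4m²/(ν²+3))`. -/
theorem wads3_effective_potential_at_infinity (ν rp rm ω m : ℝ) (k : ℤ)
    (hν : 1 < ν) (hpm : rm < rp) (hm0 : 0 ≤ rm) (hp0 : 0 < rp)
    (s : ℝ) (hs : s = Real.sqrt ((ν ^ 2 + 3) * rp * rm))
    (R2 N2 Nθ R N : ℝ → ℝ)
    (hR2 : ∀ r, R2 r = r / 4 * (3 * (ν ^ 2 - 1) * r + (ν ^ 2 + 3) * (rp + rm) - 4 * ν * s))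
    (hN2 : ∀ r, N2 r = (ν ^ 2 + 3) * (r - rp) * (r - rm) / (4 * R2 r))
    (hNθ : ∀ r, Nθ r = (2 * ν * r - s) / (2 * R2 r))
    (hR : ∀ r, R r = Real.sqrt (R2 r))
    (hN : ∀ r, N r = Real.sqrt (N2 r))
    (V : ℝ → ℝ)
    (hV : ∀ r, V r = ω ^ 2 - (ω + (k : ℝ) * Nθ r) ^ 2
      + 2 * (N r) ^ 3 * (R r * N r * deriv (deriv R) r
        + 1 / 2 * N r * (deriv R r) ^ 2 + 2 * R r * deriv R r * deriv N r)
      + (N r) ^ 2 * (m ^ 2 + (k : ℝ) ^ 2 / R2 r)) :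
    Tendsto V atTop
      (nhds ((ν ^ 2 + 3) ^ 2 / (12 * (ν ^ 2 - 1)) * (1 + 4 * m ^ 2 / (ν ^ 2 + 3)))) :=
  wads3_effective_potential_at_infinity_general ν rp rm ω m k hν s R2 N2 Nθ R N hR2 hN2 hNθ hR hN V
    hV
end

section
/- Work in units ℓ = 1. Fix real parameters ν, r₊, r₋ with ν > 1 and r₊ > r₋ ≥ 0 and r₊ > 0, fix ω, m ∈ ℝ and k ∈ ℤ, and set s = √((ν²+3)·r₊·r₋). Let R(r) = √(R²(r)) and N(r) = √(N²(r)) with R²(r) = (r/4)·(3(ν²−1)r + (ν²+3)(r₊+r₋) − 4νs), N²(r) = (ν²+3)(r−r₊)(r−r₋)/(4R²(r)), N^θ(r) = (2νr − s)/(2R²(r)), and define the effective potential V(r) = ω² − (ω + k·N^θ(r))² + 2N(r)³·( R(r)·N(r)·R''(r) + (1/2)·N(r)·R'(r)² + 2·R(r)·R'(r)·N'(r) ) + N(r)²·( m² + k²/R²(r) ), where primes denote derivatives with respect to r. Then V(r) − ω² tends to −ω̃² as r → r₊ from the right (r ∈ (r₊, ∞)), where ω̃ = ω − k·Ω_H and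 Ω_H = −2/(2ν·r₊ − s). -/
/-!
With R = √R² and N = √N², the identities (√f)' = f'/(2√f) and √f·(√f)'' = f''/2 − f'²/(4f)
turn V − ω² into −(ω + k N^θ)² plus N² times an expression that is continuous across the
horizon. Since N² vanishes at r₊ while R²(r₊) = ((2νr₊ − s)/2)² > 0, the limit is
−(ω + k N^θ(r₊))², and N^θ(r₊) = 2/(2νr₊ − s) = −Ω_H; here 2νr₊ − s > 0 because
ν > 1 and r₋ < r₊.
-/

open Filter Topology

lemma sqrt_mul_deriv_deriv_sqrt {f : ℝ → ℝ} {x : ℝ} (hf : ContDiffAt ℝ 2 f x) (hx : 0 < f x) :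
    √(f x) * deriv (deriv fun y => √(f y)) x =
      deriv (deriv f) x / 2 - deriv f x ^ 2 / (4 * f x) := by
  have hderiv : deriv (fun y => √(f y)) =ᶠ[𝓝 x] fun y => deriv f y / (2 * √(f y)) := by
    filter_upwards [hf.eventually (by simp), hf.continuousAt.eventually (lt_mem_nhds hx)]
      with y hfy hy
    exact deriv_sqrt (hfy.differentiableAt (by simp)) hy.ne'
  have hf' : HasDerivAt (deriv f) (deriv (deriv f) x) x :=
    ((hf.derivWithin (m := 1) (by norm_num)).differentiableAt (by simp)).hasDerivAt
  have hsqrt : HasDerivAt (fun y => 2 * √(f y)) (2 * (deriv f x / (2 * √(f x)))) x :=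
    ((hf.differentiableAt (by simp)).hasDerivAt.sqrt hx.ne').const_mul 2
  have hpos : 0 < √(f x) := Real.sqrt_pos.mpr hx
  have hquot : HasDerivAt (fun y => deriv f y / (2 * √(f y)))
      ((deriv (deriv f) x * (2 * √(f x)) - deriv f x * (2 * (deriv f x / (2 * √(f x)))))
        / (2 * √(f x)) ^ 2) x :=
    hf'.div hsqrt (by positivity)
  rw [hderiv.deriv_eq, hquot.deriv]
  field_simp
  rw [Real.sq_sqrt hx.le]
  ring

noncomputable def effectivePotential (ω m k : ℝ) (R2 N2 Nθ : ℝ → ℝ) (r : ℝ) : ℝ :=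
  ω ^ 2 - (ω + k * Nθ r) ^ 2
    + 2 * √(N2 r) ^ 3 * (√(R2 r) * √(N2 r) * deriv (deriv fun r => √(R2 r)) r
      + 1 / 2 * √(N2 r) * deriv (fun r => √(R2 r)) r ^ 2
      + 2 * √(R2 r) * deriv (fun r => √(R2 r)) r * deriv (fun r => √(N2 r)) r)
    + √(N2 r) ^ 2 * (m ^ 2 + k ^ 2 / R2 r)

lemma effectivePotential_sub_sq_eq {ω m k : ℝ} {R2 N2 Nθ : ℝ → ℝ} {r : ℝ}
    (hR2 : ContDiffAt ℝ 2 R2 r) (hN2 : DifferentiableAt ℝ N2 r) (hR2r : 0 < R2 r)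
    (hN2r : 0 < N2 r) :
    effectivePotential ω m k R2 N2 Nθ r - ω ^ 2 = -(ω + k * Nθ r) ^ 2
      + N2 r * (N2 r * (deriv (deriv R2) r - deriv R2 r ^ 2 / (4 * R2 r))
        + deriv N2 r * deriv R2 r + m ^ 2 + k ^ 2 / R2 r) := by
  have hR : √(R2 r) * deriv (deriv fun y => √(R2 y)) r =
      deriv (deriv R2) r / 2 - deriv R2 r ^ 2 / (4 * R2 r) :=
    sqrt_mul_deriv_deriv_sqrt hR2 hR2r
  have hR' := deriv_sqrt (hR2.differentiableAt (by simp)) hR2r.ne'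
  have hN' := deriv_sqrt hN2 hN2r.ne'
  rw [effectivePotential, hR', hN']
  generalize deriv (deriv fun y => √(R2 y)) r = X at hR ⊢
  have ha2 := Real.sq_sqrt hR2r.le
  have hb2 := Real.sq_sqrt hN2r.le
  have ha : √(R2 r) ≠ 0 := (Real.sqrt_pos.mpr hR2r).ne'
  have hb : √(N2 r) ≠ 0 := (Real.sqrt_pos.mpr hN2r).ne'
  generalize √(R2 r) = a at *
  generalize √(N2 r) = b at *
  rw [← ha2] at hR ⊢
  rw [← hb2]
  field_simp at hR ⊢
  linear_combination (4 * b ^ 4) * hR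

theorem tendsto_effectivePotential_sub_sq_nhdsGT {ω m k : ℝ} {R2 N2 Nθ : ℝ → ℝ} {rh : ℝ}
    (hR2 : ContDiffAt ℝ 3 R2 rh) (hN2 : ContDiffAt ℝ 1 N2 rh) (hNθ : ContinuousAt Nθ rh)
    (hR2h : 0 < R2 rh) (hN2h : N2 rh = 0) (hN2pos : ∀ᶠ r in 𝓝[>] rh, 0 < N2 r) :
    Tendsto (fun r => effectivePotential ω m k R2 N2 Nθ r - ω ^ 2) (𝓝[>] rh)
      (𝓝 (-(ω + k * Nθ rh) ^ 2)) := by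
  set G : ℝ → ℝ := fun r => -(ω + k * Nθ r) ^ 2
      + N2 r * (N2 r * (deriv (deriv R2) r - deriv R2 r ^ 2 / (4 * R2 r))
        + deriv N2 r * deriv R2 r + m ^ 2 + k ^ 2 / R2 r) with hG
  have hGc : ContinuousAt G rh := by
    have hR2' : ContinuousAt (deriv R2) rh :=
      (hR2.derivWithin (m := 0) (by norm_num)).continuousAt
    have hR2'' : ContinuousAt (deriv (deriv R2)) rh :=
      ((hR2.derivWithin (m := 2) (by norm_num)).derivWithin (m := 0) (by norm_num)).continuousAt
    have hN2' : ContinuousAt (deriv N2) rh :=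
      (hN2.derivWithin (m := 0) (by norm_num)).continuousAt
    rw [hG]
    fun_prop (disch := positivity)
  have hGrh : G rh = -(ω + k * Nθ rh) ^ 2 := by simp [hG, hN2h]
  rw [← hGrh]
  refine (hGc.tendsto.mono_left nhdsWithin_le_nhds).congr' ?_
  filter_upwards [hN2pos, nhdsWithin_le_nhds (hR2.eventually (by simp)),
    nhdsWithin_le_nhds (hN2.eventually (by simp)),
    nhdsWithin_le_nhds (hR2.continuousAt.eventually (lt_mem_nhds hR2h))]
    with r hN2r hR2r hN2d hR2pos
  exact (effectivePotential_sub_sq_eq (hR2r.of_le (by norm_num))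
    (hN2d.differentiableAt (by simp)) hR2pos hN2r).symm

lemma sqrt_mul_mul_lt_two_mul_mul {ν rp rm : ℝ} (hν : 1 ≤ ν) (hpm : rm < rp) (hm0 : 0 ≤ rm) :
    √((ν ^ 2 + 3) * rp * rm) < 2 * ν * rp := by
  have hrp : 0 < rp := hm0.trans_lt hpm
  rw [Real.sqrt_lt' (by positivity)]
  nlinarith [mul_lt_mul_of_pos_left hpm (by positivity : 0 < (ν ^ 2 + 3) * rp),
    mul_nonneg (sq_nonneg rp) (by nlinarith : (0 : ℝ) ≤ ν ^ 2 - 1)]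

theorem wads3_effective_potential_at_horizon_general (ν rp rm ω m : ℝ) (k : ℤ)
    (hν : 1 < ν) (hpm : rm < rp) (hm0 : 0 ≤ rm)
    (s : ℝ) (hs : s = Real.sqrt ((ν ^ 2 + 3) * rp * rm))
    (ΩH : ℝ) (hΩH : ΩH = -2 / (2 * ν * rp - s))
    (R2 N2 Nθ R N : ℝ → ℝ)
    (hR2 : ∀ r, R2 r = r / 4 * (3 * (ν ^ 2 - 1) * r + (ν ^ 2 + 3) * (rp + rm) - 4 * ν * s))
    (hN2 : ∀ r, N2 r = (ν ^ 2 + 3) * (r - rp) * (r - rm) / (4 * R2 r))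
    (hNθ : ∀ r, Nθ r = (2 * ν * r - s) / (2 * R2 r))
    (hR : ∀ r, R r = Real.sqrt (R2 r))
    (hN : ∀ r, N r = Real.sqrt (N2 r))
    (V : ℝ → ℝ)
    (hV : ∀ r, V r = ω ^ 2 - (ω + (k : ℝ) * Nθ r) ^ 2
      + 2 * (N r) ^ 3 * (R r * N r * deriv (deriv R) r
        + 1 / 2 * N r * (deriv R r) ^ 2 + 2 * R r * deriv R r * deriv N r)
      + (N r) ^ 2 * (m ^ 2 + (k : ℝ) ^ 2 / R2 r)) :
    Tendsto (fun r => V r - ω ^ 2) (nhdsWithin rp (Set.Ioi rp))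
      (nhds (-(ω - (k : ℝ) * ΩH) ^ 2)) := by
  have hs2 : s ^ 2 = (ν ^ 2 + 3) * rp * rm := by
    rw [hs, Real.sq_sqrt (by positivity [hm0.trans_lt hpm])]
  have hgap : s < 2 * ν * rp := hs ▸ sqrt_mul_mul_lt_two_mul_mul hν.le hpm hm0
  have hR2rp : R2 rp = ((2 * ν * rp - s) / 2) ^ 2 := by
    rw [hR2]; linear_combination (-1 / 4 : ℝ) * hs2
  have hR2pos : 0 < R2 rp := by rw [hR2rp]; nlinarith
  have hR2smooth : ContDiff ℝ 3 R2 := by rw [funext hR2]; fun_prop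
  have hR2c : ContDiffAt ℝ 1 R2 rp := hR2smooth.contDiffAt.of_le (by norm_num)
  have hN2smooth : ContDiffAt ℝ 1 N2 rp := by
    rw [funext hN2]; fun_prop (disch := positivity)
  have hNθc : ContinuousAt Nθ rp := by
    have := hR2c.continuousAt
    rw [funext hNθ]; fun_prop (disch := positivity)
  have hN2pos : ∀ᶠ r in 𝓝[>] rp, 0 < N2 r := by
    filter_upwards [self_mem_nhdsWithin, nhdsWithin_le_nhds
      (hR2smooth.continuous.continuousAt.eventually (lt_mem_nhds hR2pos))]
      with r (hr : rp < r) hR2r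
    have hrp := sub_pos.2 hr
    have hrm := sub_pos.2 (hpm.trans hr)
    rw [hN2]
    positivity
  obtain rfl : R = fun r => √(R2 r) := funext hR
  obtain rfl : N = fun r => √(N2 r) := funext hN
  obtain rfl : V = effectivePotential ω m k R2 N2 Nθ := funext hV
  have hNθrp : Nθ rp = -ΩH := by
    rw [hNθ, hR2rp, hΩH]; field_simp
  rw [sub_eq_add_neg, ← mul_neg, ← hNθrp]
  exact tendsto_effectivePotential_sub_sq_nhdsGT hR2smooth.contDiffAt hN2smooth hNθc hR2pos
    (by simp [hN2]) hN2pos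

/-- Near the horizon, the effective potential of a massive scalar field mode on
the warped AdS₃ black hole satisfies `V(r) − ω² → −ω̃²` as `r → r₊⁺`, where
`ω̃ = ω − k·Ω_H` is the co-rotating frequency. -/
theorem wads3_effective_potential_at_horizon (ν rp rm ω m : ℝ) (k : ℤ)
    (hν : 1 < ν) (hpm : rm < rp) (hm0 : 0 ≤ rm) (hp0 : 0 < rp)
    (s : ℝ) (hs : s = Real.sqrt ((ν ^ 2 + 3) * rp * rm))
    (ΩH : ℝ) (hΩH : ΩH = -2 / (2 * ν * rp - s))
    (R2 N2 Nθ R N : ℝ → ℝ)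
    (hR2 : ∀ r, R2 r = r / 4 * (3 * (ν ^ 2 - 1) * r + (ν ^ 2 + 3) * (rp + rm) - 4 * ν * s))
    (hN2 : ∀ r, N2 r = (ν ^ 2 + 3) * (r - rp) * (r - rm) / (4 * R2 r))
    (hNθ : ∀ r, Nθ r = (2 * ν * r - s) / (2 * R2 r))
    (hR : ∀ r, R r = Real.sqrt (R2 r))
    (hN : ∀ r, N r = Real.sqrt (N2 r))
    (V : ℝ → ℝ)
    (hV : ∀ r, V r = ω ^ 2 - (ω + (k : ℝ) * Nθ r) ^ 2
      + 2 * (N r) ^ 3 * (R r * N r * deriv (deriv R) r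
        + 1 / 2 * N r * (deriv R r) ^ 2 + 2 * R r * deriv R r * deriv N r)
      + (N r) ^ 2 * (m ^ 2 + (k : ℝ) ^ 2 / R2 r)) :
    Tendsto (fun r => V r - ω ^ 2) (nhdsWithin rp (Set.Ioi rp))
      (nhds (-(ω - (k : ℝ) * ΩH) ^ 2)) :=
  wads3_effective_potential_at_horizon_general ν rp rm ω m k hν hpm hm0 s hs ΩH hΩH R2 N2 Nθ R N hR2
    hN2 hNθ hR hN V hV
end
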